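/- Suppose there exist simple 5-(18,6,5), 5-(18,7,6), 5-(18,8,60), 5-(18,9,210) and 5-(18,10,990) designs. Then there exists a simple 5-(36, 10, 34146) design (note 34146 = 542 × 63). -/

import Mathlib

/-!
Take two disjoint 18-sets `X₁`, `X₂` and, for every `i ∈ {0,…,10} \ {5}`, all sets `A ∪ C` with
`A ⊆ X₁`, `#A = i`, `C ⊆ X₂`, `#C = 10 - i`: for `i < 5`, `A` is arbitrary and `C` is a block of
the given design of block size `10 - i` on `X₂`; for `i > 5`, `A` is a block of the design of
block size `i` on `X₁` and `C` is arbitrary. Blocks of different layers differ in their trace on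
`X₁`, so a 5-set `T` with `#(T ∩ X₁) = j` lies in `∑ᵢ aᵢ(j) bᵢ(5 - j)` blocks, where `aᵢ(s)`
(resp. `bᵢ(s)`) counts the layer-`i` traces on `X₁` (resp. `X₂`) through a fixed `s`-set: a
binomial coefficient for the complete side, the index of an `s`-design for the other. This sum
equals `34146` for every `j ≤ 5`.
-/

/-- `SimpleDesignExists t v k lam` asserts the existence of a simple
`t-(v, k, lam)` design: a `v`-set `X` together with a set `B` of distinct
`k`-element subsets of `X` (blocks) such that every `t`-element subset of `X`
is contained in exactly `lam` blocks. -/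
def SimpleDesignExists (t v k lam : ℕ) : Prop :=
  ∃ (X : Finset ℕ) (B : Finset (Finset ℕ)),
    X.card = v ∧
    (∀ b ∈ B, b ⊆ X ∧ b.card = k) ∧
    (∀ T ⊆ X, T.card = t → (B.filter (fun b => T ⊆ b)).card = lam)

open Finset
open scoped FinsetFamily

section Design

variable {α β : Type*} [DecidableEq α] [DecidableEq β]

def IsDesign (t k lam : ℕ) (X : Finset α) (B : Finset (Finset α)) : Prop :=
  (∀ b ∈ B, b ⊆ X ∧ #b = k) ∧ ∀ T ⊆ X, #T = t → #{b ∈ B | T ⊆ b} = lam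

variable {t k lam : ℕ} {X : Finset α} {B : Finset (Finset α)}

theorem IsDesign.image {f : α → β} (hf : Set.InjOn f X) (h : IsDesign t k lam X B) :
    IsDesign t k lam (X.image f) (B.image (Finset.image f)) := by
  obtain ⟨hB, hT⟩ := h
  have hsub {b b' : Finset α} (hb : b ∈ B) (hb' : b' ∈ B) :
      b.image f ⊆ b'.image f ↔ b ⊆ b' :=
    image_subset_image_iff_of_injOn hf (hB b hb).1 (hB b' hb').1
  refine ⟨?_, fun T' hT'X hT't => ?_⟩
  · rintro _ hb'
    obtain ⟨b, hb, rfl⟩ := mem_image.1 hb'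
    exact ⟨image_subset_image (hB b hb).1,
      (card_image_of_injOn (hf.mono (mod_cast (hB b hb).1))).trans (hB b hb).2⟩
  obtain ⟨T, hTX, rfl⟩ := subset_image_iff.1 hT'X
  rw [card_image_of_injOn (hf.mono (mod_cast hTX))] at hT't
  rw [filter_image, card_image_of_injOn, ← hT T hTX hT't]
  · exact congrArg card <| filter_congr fun b hb =>
      image_subset_image_iff_of_injOn hf hTX (hB b hb).1
  · intro b hb b' hb' hbb'
    simp only [coe_filter] at hb hb'
    exact ((hsub hb.1 hb'.1).1 hbb'.le).antisymm ((hsub hb'.1 hb.1).1 hbb'.ge)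

theorem IsDesign.exists_of_card_eq [Nonempty β] (h : IsDesign t k lam X B) {Y : Finset β}
    (hXY : #X = #Y) : ∃ B' : Finset (Finset β), IsDesign t k lam Y B' := by
  obtain ⟨f, hf⟩ := X.finite_toSet.exists_bijOn_of_encard_eq (t := (Y : Set β)) (by
    simp [Set.encard_coe_eq_coe_finsetCard, hXY])
  have hY : X.image f = Y := by exact_mod_cast hf.image_eq
  exact ⟨_, hY ▸ h.image hf.injOn⟩

-- `if`: for `s > k` the truncated subtraction would give `choose (v - s) 0 = 1`.
def completeCount (v k s : ℕ) : ℕ := if s ≤ k then (v - s).choose (k - s) else 0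

-- The division is exact: see `IsDesign.card_filter_superset_mul_choose`.
def derivedCount (v t k lam s : ℕ) : ℕ := lam * (v - s).choose (t - s) / (k - s).choose (t - s)

theorem card_filter_powersetCard_superset {S : Finset α} (hS : S ⊆ X) (k : ℕ) :
    #{A ∈ X.powersetCard k | S ⊆ A} = completeCount #X k #S := by
  unfold completeCount
  split_ifs with hSk
  · exact card_filter_powersetCard_subset S X k hS hSk
  · rw [card_eq_zero, filter_eq_empty_iff]
    exact fun A hA hSA => hSk ((card_le_card hSA).trans (mem_powersetCard.1 hA).2.le)

theorem IsDesign.card_filter_superset_mul_choose (h : IsDesign t k lam X B) {S : Finset α}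
    (hS : S ⊆ X) (hSt : #S ≤ t) :
    #{b ∈ B | S ⊆ b} * (k - #S).choose (t - #S) = lam * (#X - #S).choose (t - #S) := by
  obtain ⟨hB, hT⟩ := h
  have hcount := card_mul_eq_card_mul (· ⊆ ·) (s := {T ∈ X.powersetCard t | S ⊆ T})
    (t := {b ∈ B | S ⊆ b}) (m := lam) (n := (k - #S).choose (t - #S)) ?_ ?_
  · rw [card_filter_powersetCard_subset S X t hS hSt] at hcount
    rw [← hcount, mul_comm]
  · intro T hTP
    simp only [mem_filter, mem_powersetCard] at hTP
    rw [bipartiteAbove, filter_filter, ← hT T hTP.1.1 hTP.1.2]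
    exact congrArg card <| filter_congr fun b _ => ⟨And.right, fun hTb => ⟨hTP.2.trans hTb, hTb⟩⟩
  · intro b hb
    rw [mem_filter] at hb
    rw [bipartiteBelow, ← (hB b hb.1).2, ← card_filter_powersetCard_subset S b t hb.2 hSt]
    congr 1
    ext T
    simp only [mem_filter, mem_powersetCard]
    exact ⟨fun ⟨⟨⟨_, hTt⟩, hST⟩, hTb⟩ => ⟨⟨hTb, hTt⟩, hST⟩,
      fun ⟨⟨hTb, hTt⟩, hST⟩ => ⟨⟨⟨hTb.trans (hB b hb.1).1, hTt⟩, hST⟩, hTb⟩⟩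

theorem IsDesign.card_filter_superset (h : IsDesign t k lam X B) (htk : t ≤ k) {S : Finset α}
    (hS : S ⊆ X) (hSt : #S ≤ t) : #{b ∈ B | S ⊆ b} = derivedCount #X t k lam #S :=
  Nat.eq_div_of_mul_eq_left (Nat.choose_pos (by omega)).ne'
    (h.card_filter_superset_mul_choose hS hSt)

end Design

section Join

variable {α : Type*} [DecidableEq α] {X₁ X₂ A C T : Finset α} {F G : Finset (Finset α)}

theorem union_inter_eq_left_of_disjoint (hA : A ⊆ X₁) (hC : Disjoint C X₁) :
    (A ∪ C) ∩ X₁ = A := by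
  rw [union_inter_distrib_right, inter_eq_left.2 hA, disjoint_iff_inter_eq_empty.1 hC, union_empty]

theorem union_inter_eq_right_of_disjoint (hA : Disjoint A X₂) (hC : C ⊆ X₂) :
    (A ∪ C) ∩ X₂ = C := by
  rw [union_comm, union_inter_eq_left_of_disjoint hC hA]

theorem subset_union_iff_inter_subset (hX : Disjoint X₁ X₂) (hT : T ⊆ X₁ ∪ X₂) (hA : A ⊆ X₁)
    (hC : C ⊆ X₂) : T ⊆ A ∪ C ↔ T ∩ X₁ ⊆ A ∧ T ∩ X₂ ⊆ C := by
  refine ⟨fun h => ⟨?_, ?_⟩, fun ⟨h₁, h₂⟩ => ?_⟩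
  · rw [← union_inter_eq_left_of_disjoint hA (disjoint_of_subset_left hC hX.symm)]
    exact inter_subset_inter h subset_rfl
  · rw [← union_inter_eq_right_of_disjoint (disjoint_of_subset_left hA hX) hC]
    exact inter_subset_inter h subset_rfl
  · calc T = T ∩ X₁ ∪ T ∩ X₂ := by rw [← inter_union_distrib_left, inter_eq_left.2 hT]
      _ ⊆ A ∪ C := union_subset_union h₁ h₂

theorem inter_mem_of_mem_sups (hX : Disjoint X₁ X₂) (hF : ∀ A ∈ F, A ⊆ X₁)
    (hG : ∀ C ∈ G, C ⊆ X₂) {b : Finset α} (hb : b ∈ F ⊻ G) : b ∩ X₁ ∈ F := by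
  obtain ⟨A, hA, C, hC, rfl⟩ := mem_sups.1 hb
  rwa [sup_eq_union,
    union_inter_eq_left_of_disjoint (hF A hA) (disjoint_of_subset_left (hG C hC) hX.symm)]

theorem card_filter_superset_sups (hX : Disjoint X₁ X₂) (hF : ∀ A ∈ F, A ⊆ X₁)
    (hG : ∀ C ∈ G, C ⊆ X₂) (hT : T ⊆ X₁ ∪ X₂) :
    #{b ∈ F ⊻ G | T ⊆ b} = #{A ∈ F | T ∩ X₁ ⊆ A} * #{C ∈ G | T ∩ X₂ ⊆ C} := by
  have hsplit : ∀ p ∈ F ×ˢ G, (p.1 ∪ p.2) ∩ X₁ = p.1 ∧ (p.1 ∪ p.2) ∩ X₂ = p.2 := fun p hp =>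
    have hA := hF p.1 (mem_product.1 hp).1
    have hC := hG p.2 (mem_product.1 hp).2
    ⟨union_inter_eq_left_of_disjoint hA (disjoint_of_subset_left hC hX.symm),
      union_inter_eq_right_of_disjoint (disjoint_of_subset_left hA hX) hC⟩
  rw [← card_product, ← filter_product]
  change #{b ∈ (F ×ˢ G).image (fun p => p.1 ∪ p.2) | T ⊆ b} = _
  rw [filter_image, card_image_of_injOn]
  · refine congrArg card (filter_congr fun p hp => ?_)
    exact subset_union_iff_inter_subset hX hT (hF p.1 (mem_product.1 hp).1)
      (hG p.2 (mem_product.1 hp).2)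
  · intro p hp q hq hpq
    have hp' := hsplit p (mem_filter.1 hp).1
    have hq' := hsplit q (mem_filter.1 hq).1
    simp only at hpq
    exact Prod.ext (hp'.1.symm.trans (hpq ▸ hq'.1)) (hp'.2.symm.trans (hpq ▸ hq'.2))

theorem card_filter_superset_biUnion_sups {I : Finset ℕ} {F G : ℕ → Finset (Finset α)}
    (hX : Disjoint X₁ X₂) (hF : ∀ i ∈ I, ∀ A ∈ F i, A ⊆ X₁ ∧ #A = i)
    (hG : ∀ i ∈ I, ∀ C ∈ G i, C ⊆ X₂) (hT : T ⊆ X₁ ∪ X₂) :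
    #{b ∈ I.biUnion (fun i => F i ⊻ G i) | T ⊆ b}
      = ∑ i ∈ I, #{A ∈ F i | T ∩ X₁ ⊆ A} * #{C ∈ G i | T ∩ X₂ ⊆ C} := by
  have htrace : ∀ i ∈ I, ∀ b ∈ F i ⊻ G i, #(b ∩ X₁) = i := fun i hi b hb =>
    (hF i hi _ (inter_mem_of_mem_sups hX (fun A hA => (hF i hi A hA).1) (hG i hi) hb)).2
  rw [filter_biUnion, card_biUnion]
  · exact sum_congr rfl fun i hi =>
      card_filter_superset_sups hX (fun A hA => (hF i hi A hA).1) (hG i hi) hT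
  · intro i hi j hj hij
    refine disjoint_left.2 fun b hbi hbj => hij ?_
    rw [← htrace i hi b (mem_filter.1 hbi).1, htrace j hj b (mem_filter.1 hbj).1]

end Join

section Doubling

variable {α : Type*} [DecidableEq α] {t n i : ℕ} {lam : ℕ → ℕ} {X₁ X₂ : Finset α}
  {D E : ℕ → Finset (Finset α)}

def doublingIndices (t n : ℕ) : Finset ℕ := (range (n + 1)).erase t

theorem mem_doublingIndices : i ∈ doublingIndices t n ↔ i ≠ t ∧ i ≤ n := by
  rw [doublingIndices, mem_erase, mem_range, Nat.lt_succ_iff]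

def doublingLeft (t : ℕ) (X₁ : Finset α) (D : ℕ → Finset (Finset α)) (i : ℕ) :
    Finset (Finset α) :=
  if i < t then X₁.powersetCard i else D i

def doublingRight (t n : ℕ) (X₂ : Finset α) (E : ℕ → Finset (Finset α)) (i : ℕ) :
    Finset (Finset α) :=
  if i < t then E (n - i) else X₂.powersetCard (n - i)

def doubling (t n : ℕ) (X₁ X₂ : Finset α) (D E : ℕ → Finset (Finset α)) : Finset (Finset α) :=
  (doublingIndices t n).biUnion fun i => doublingLeft t X₁ D i ⊻ doublingRight t n X₂ E i

def doublingLeftCount (v t : ℕ) (lam : ℕ → ℕ) (i s : ℕ) : ℕ :=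
  if i < t then completeCount v i s else derivedCount v t i (lam i) s

def doublingRightCount (v t n : ℕ) (lam : ℕ → ℕ) (i s : ℕ) : ℕ :=
  if i < t then derivedCount v t (n - i) (lam (n - i)) s else completeCount v (n - i) s

def doublingCount (v t n : ℕ) (lam : ℕ → ℕ) (j : ℕ) : ℕ :=
  ∑ i ∈ doublingIndices t n, doublingLeftCount v t lam i j * doublingRightCount v t n lam i (t - j)

theorem subset_and_card_eq_of_mem_doublingLeft
    (hD : ∀ k, t < k → k ≤ n → IsDesign t k (lam k) X₁ (D k)) (hi : i ∈ doublingIndices t n)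
    {A : Finset α} (hA : A ∈ doublingLeft t X₁ D i) : A ⊆ X₁ ∧ #A = i := by
  rw [mem_doublingIndices] at hi
  unfold doublingLeft at hA
  split_ifs at hA with hit
  · exact mem_powersetCard.1 hA
  · exact (hD i (by omega) hi.2).1 A hA

theorem subset_and_card_eq_of_mem_doublingRight (htn : 2 * t ≤ n)
    (hE : ∀ k, t < k → k ≤ n → IsDesign t k (lam k) X₂ (E k))
    {C : Finset α} (hC : C ∈ doublingRight t n X₂ E i) : C ⊆ X₂ ∧ #C = n - i := by
  unfold doublingRight at hC
  split_ifs at hC with hit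
  · exact (hE (n - i) (by omega) (by omega)).1 C hC
  · exact mem_powersetCard.1 hC

theorem card_filter_superset_doublingLeft
    (hD : ∀ k, t < k → k ≤ n → IsDesign t k (lam k) X₁ (D k)) (hi : i ∈ doublingIndices t n)
    {S : Finset α} (hS : S ⊆ X₁) (hSt : #S ≤ t) :
    #{A ∈ doublingLeft t X₁ D i | S ⊆ A} = doublingLeftCount #X₁ t lam i #S := by
  rw [mem_doublingIndices] at hi
  unfold doublingLeft doublingLeftCount
  split_ifs with hit
  · exact card_filter_powersetCard_superset hS i
  · exact (hD i (by omega) hi.2).card_filter_superset (by omega) hS hSt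

theorem card_filter_superset_doublingRight (htn : 2 * t ≤ n)
    (hE : ∀ k, t < k → k ≤ n → IsDesign t k (lam k) X₂ (E k)) {S : Finset α} (hS : S ⊆ X₂)
    (hSt : #S ≤ t) :
    #{C ∈ doublingRight t n X₂ E i | S ⊆ C} = doublingRightCount #X₂ t n lam i #S := by
  unfold doublingRight doublingRightCount
  split_ifs with hit
  · exact (hE (n - i) (by omega) (by omega)).card_filter_superset (by omega) hS hSt
  · exact card_filter_powersetCard_superset hS (n - i)

theorem isDesign_doubling {v Λ : ℕ} (htn : 2 * t ≤ n) (hX : Disjoint X₁ X₂)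
    (hX₁ : #X₁ = v) (hX₂ : #X₂ = v)
    (hD : ∀ k, t < k → k ≤ n → IsDesign t k (lam k) X₁ (D k))
    (hE : ∀ k, t < k → k ≤ n → IsDesign t k (lam k) X₂ (E k))
    (hΛ : ∀ j ≤ t, doublingCount v t n lam j = Λ) :
    IsDesign t n Λ (X₁ ∪ X₂) (doubling t n X₁ X₂ D E) := by
  have hleft := fun i (hi : i ∈ doublingIndices t n) A =>
    subset_and_card_eq_of_mem_doublingLeft (A := A) hD hi
  have hright := fun i C => subset_and_card_eq_of_mem_doublingRight (i := i) (C := C) htn hE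
  refine ⟨fun b hb => ?_, fun T hT hTt => ?_⟩
  · obtain ⟨i, hi, hb⟩ := mem_biUnion.1 hb
    obtain ⟨A, hA, C, hC, rfl⟩ := mem_sups.1 hb
    obtain ⟨hAX, hAi⟩ := hleft i hi A hA
    obtain ⟨hCX, hCi⟩ := hright i C hC
    refine ⟨union_subset_union hAX hCX, ?_⟩
    rw [sup_eq_union, card_union_of_disjoint (hX.mono hAX hCX), hAi, hCi]
    have := (mem_doublingIndices.1 hi).2
    omega
  · have htrace : #(T ∩ X₁) + #(T ∩ X₂) = t := by
      rw [← card_union_of_disjoint (hX.mono inter_subset_right inter_subset_right),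
        ← inter_union_distrib_left, inter_eq_left.2 hT, hTt]
    rw [doubling, card_filter_superset_biUnion_sups hX hleft
      (fun i _ C hC => (hright i C hC).1) hT, ← hΛ #(T ∩ X₁) (by omega), doublingCount]
    refine sum_congr rfl fun i hi => ?_
    rw [card_filter_superset_doublingLeft hD hi inter_subset_right (by omega),
      card_filter_superset_doublingRight htn hE inter_subset_right (by omega), hX₁, hX₂,
      ← htrace, Nat.add_sub_cancel_left]

end Doubling

def lambda5_18 : ℕ → ℕ
  | 6 => 5 | 7 => 6 | 8 => 60 | 9 => 210 | 10 => 990 | _ => 0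

theorem designExists_5_36_10_542
    (h1 : SimpleDesignExists 5 18 6 5)
    (h2 : SimpleDesignExists 5 18 7 6)
    (h3 : SimpleDesignExists 5 18 8 60)
    (h4 : SimpleDesignExists 5 18 9 210)
    (h5 : SimpleDesignExists 5 18 10 990)
    : SimpleDesignExists 5 36 10 34146 := by
  have hexists : ∀ k, 5 < k → k ≤ 10 → ∀ X : Finset ℕ, #X = 18 →
      ∃ B, IsDesign 5 k (lambda5_18 k) X B := by
    intro k hk5 hk10 X hX
    obtain ⟨X₀, B₀, hX₀, hB₀⟩ : SimpleDesignExists 5 18 k (lambda5_18 k) := by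
      interval_cases k <;> assumption
    exact IsDesign.exists_of_card_eq hB₀ (hX₀.trans hX.symm)
  let X₁ := range 18
  let X₂ := (range 18).map (addLeftEmbedding 18)
  have hX : Disjoint X₁ X₂ := by
    simp only [X₁, X₂, disjoint_left, mem_range, mem_map, addLeftEmbedding_apply]
    omega
  choose! D hD using fun k hk5 hk10 => hexists k hk5 hk10 X₁ (card_range 18)
  choose! E hE using fun k hk5 hk10 => hexists k hk5 hk10 X₂ (by simp [X₂])
  refine ⟨X₁ ∪ X₂, doubling 5 10 X₁ X₂ D E, by simp [card_union_of_disjoint hX, X₁, X₂], ?_⟩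
  exact isDesign_doubling le_rfl hX (card_range 18) (by simp [X₂]) hD hE (by decide)
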